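/- The homomorphic rewrite relation on the message algebra is locally confluent: if m → m₁ and m → m₂, then there exists a message m₃ with m₁ →* m₃ and m₂ →* m₃, where →* denotes the reflexive–transitive closure of →. -/

import Mathlib

/-!
Only one pair of redexes can overlap: a homomorphism redex `{m·m'}_k` and a step inside `m·m'`,
which necessarily rewrites `m` or `m'`. Pushing that step under `k` on the other side closes the
peak in one step each way. All other peaks are either non-overlapping (steps in the two
components of a pair commute) or nested in the same constructor, where induction applies.
-/

/-- Messages: the free term algebra generated by atoms under pairing and
encryption with atomic keys. -/
inductive Msg (A : Type) : Type
  | atom : A → Msg A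
  | pair : Msg A → Msg A → Msg A
  | enc : Msg A → A → Msg A

/-- The homomorphic rewrite relation: smallest relation containing every
instance of `{m·m'}_k → {m}_k·{m'}_k` and closed under contexts. -/
inductive Rw {A : Type} : Msg A → Msg A → Prop
  | homo (m m' : Msg A) (k : A) :
      Rw (.enc (.pair m m') k) (.pair (.enc m k) (.enc m' k))
  | pairL {m m' : Msg A} (n : Msg A) : Rw m m' → Rw (.pair m n) (.pair m' n)
  | pairR {m m' : Msg A} (n : Msg A) : Rw m m' → Rw (.pair n m) (.pair n m')
  | enc {m m' : Msg A} (k : A) : Rw m m' → Rw (.enc m k) (.enc m' k)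

open Relation

theorem Relation.Join.reflTransGen_lift {α β : Type*} {r : α → α → Prop} {p : β → β → Prop}
    (f : α → β) (h : ∀ a b, r a b → p (f a) (f b)) {a b : α} (hab : Join (ReflTransGen r) a b) :
    Join (ReflTransGen p) (f a) (f b) :=
  let ⟨c, hac, hbc⟩ := hab
  ⟨f c, hac.lift f h, hbc.lift f h⟩

theorem Rw.join_homo_enc {A : Type} {a b p : Msg A} (k : A) (h : Rw (.pair a b) p) :
    Join (ReflTransGen Rw) (.pair (.enc a k) (.enc b k)) (.enc p k) := by
  cases h with
  | pairL _ h => exact ⟨_, .single (.pairL _ (.enc k h)), .single (.homo _ _ k)⟩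
  | pairR _ h => exact ⟨_, .single (.pairR _ (.enc k h)), .single (.homo _ _ k)⟩

theorem homomorphic_rewrite_locally_confluent_general
    (A : Type) (m m₁ m₂ : Msg A)
    (h₁ : Rw m m₁) (h₂ : Rw m m₂) :
    ∃ m₃ : Msg A,
      Relation.ReflTransGen Rw m₁ m₃ ∧ Relation.ReflTransGen Rw m₂ m₃ := by
  induction h₁ generalizing m₂ with
  | homo a b k =>
    cases h₂ with
    | homo => exact ⟨_, .refl, .refl⟩
    | enc k h => exact Rw.join_homo_enc k h
  | pairL n h ih =>
    cases h₂ with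
    | pairL n h' => exact Join.reflTransGen_lift (Msg.pair · n) (fun _ _ => Rw.pairL n) (ih _ h')
    | pairR n h' => exact ⟨_, .single (.pairR _ h'), .single (.pairL _ h)⟩
  | pairR n h ih =>
    cases h₂ with
    | pairL n h' => exact ⟨_, .single (.pairL _ h'), .single (.pairR _ h)⟩
    | pairR n h' => exact Join.reflTransGen_lift (Msg.pair n ·) (fun _ _ => Rw.pairR n) (ih _ h')
  | enc k h ih =>
    cases h₂ with
    | homo => exact Std.Symm.symm _ _ (Rw.join_homo_enc k h)
    | enc k h' => exact Join.reflTransGen_lift (Msg.enc · k) (fun _ _ => Rw.enc k) (ih _ h')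

/-- Local confluence of the homomorphic rewrite relation. -/
theorem homomorphic_rewrite_locally_confluent
    (A : Type) [Countable A] (m m₁ m₂ : Msg A)
    (h₁ : Rw m m₁) (h₂ : Rw m m₂) :
    ∃ m₃ : Msg A,
      Relation.ReflTransGen Rw m₁ m₃ ∧ Relation.ReflTransGen Rw m₂ m₃ :=
  homomorphic_rewrite_locally_confluent_general A m m₁ m₂ h₁ h₂
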